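/- arXiv:1902.08015 — 6 statements merged into one kernel-verified Lean document; each statement's English description precedes it below -/
import Mathlib

section
/- For integers n ≥ k ≥ 0 and λ ∈ ℝ, the degenerate incomplete Bell polynomial satisfies the explicit formula B_{n,k}(x₁,x₂,…,x_{n-k+1}|λ) = ∑ n!/(i₁! i₂! ⋯ i_{n-k+1}!) · (x₁(1)_{1,λ}/1!)^{i₁} (x₂(1)_{2,λ}/2!)^{i₂} ⋯ (x_{n-k+1}(1)_{n-k+1,λ}/(n-k+1)!)^{i_{n-k+1}}, where the summation is over all nonnegative integers i₁,…,i_{n-k+1} with i₁+i₂+⋯+i_{n-k+1} = k and i₁+2i₂+⋯+(n-k+1)i_{n-k+1} = n. -/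
open PowerSeries Finset Nat

/-- The degenerate falling factorial `(x)_{n,λ} = x(x-λ)⋯(x-(n-1)λ)`. -/
noncomputable def dFall (l x : ℝ) (n : ℕ) : ℝ := ∏ i ∈ Finset.range n, (x - i * l)

/-- The degenerate rising factorial `⟨x⟩_{n,λ} = x(x+λ)⋯(x+(n-1)λ)`. -/
noncomputable def dRise (l x : ℝ) (n : ℕ) : ℝ := ∏ i ∈ Finset.range n, (x + i * l)

/-- The degenerate exponential formal power series `e_λ^x(t) = ∑_{n≥0} (x)_{n,λ} tⁿ/n!`. -/
noncomputable def degExp (l x : ℝ) : PowerSeries ℝ :=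
  PowerSeries.mk fun n => dFall l x n / (n ! : ℝ)

/-- Exponential of a formal power series `G` (with zero constant term):
`coeff n (exp G) = ∑_{k=0}^{n} (1/k!) coeff n (G^k)`. -/
noncomputable def expComp (G : PowerSeries ℝ) : PowerSeries ℝ :=
  PowerSeries.mk fun n =>
    ∑ k ∈ Finset.range (n + 1), (k ! : ℝ)⁻¹ * PowerSeries.coeff n (G ^ k)

/-- The series `∑_{m≥1} x_m (1)_{m,λ} t^m/m!`. -/
noncomputable def degBellSeries (l : ℝ) (x : ℕ → ℝ) : PowerSeries ℝ :=
  PowerSeries.mk fun m => if m = 0 then 0 else x m * dFall l 1 m / (m ! : ℝ)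

/-- The degenerate incomplete Bell polynomial `B_{n,k}(x₁,…,x_{n-k+1}|λ)`, defined by
`(1/k!)(∑_{m≥1} x_m (1)_{m,λ} t^m/m!)^k = ∑_{n≥k} B_{n,k}(x₁,…|λ) tⁿ/n!`. -/
noncomputable def degIncBell (l : ℝ) (x : ℕ → ℝ) (n k : ℕ) : ℝ :=
  (n ! : ℝ) * PowerSeries.coeff n ((k ! : ℝ)⁻¹ • (degBellSeries l x) ^ k)

/-- The degenerate complete Bell polynomial `B_n(x₁,…,x_n|λ)`, defined by
`exp(∑_{i≥1} x_i (1)_{i,λ} t^i/i!) = ∑_{n≥0} B_n(x₁,…,x_n|λ) tⁿ/n!`. -/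
noncomputable def degCompBell (l : ℝ) (x : ℕ → ℝ) (n : ℕ) : ℝ :=
  (n ! : ℝ) * PowerSeries.coeff n (expComp (degBellSeries l x))

/-- The degenerate Stirling numbers of the second kind `S_{2,λ}(n,k)`, defined by
`(1/k!)(e_λ(t)-1)^k = ∑_{n≥k} S_{2,λ}(n,k) tⁿ/n!`. -/
noncomputable def degStirling2 (l : ℝ) (n k : ℕ) : ℝ :=
  (n ! : ℝ) * PowerSeries.coeff n ((k ! : ℝ)⁻¹ • (degExp l 1 - 1) ^ k)

/-- The degenerate Bell polynomials `B_{n,λ}(x)`, defined by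
`exp(x(e_λ(t)-1)) = ∑_{n≥0} B_{n,λ}(x) tⁿ/n!`. -/
noncomputable def degBell (l x : ℝ) (n : ℕ) : ℝ :=
  (n ! : ℝ) * PowerSeries.coeff n (expComp (x • (degExp l 1 - 1)))

/-- The formal power series `log(1+t) = ∑_{n≥1} (-1)^{n+1} tⁿ/n`. -/
noncomputable def logOnePlus : PowerSeries ℝ :=
  PowerSeries.mk fun n => if n = 0 then 0 else (-1) ^ (n + 1) / (n : ℝ)

/-- The (signed) Stirling numbers of the first kind `S₁(n,k)`, defined by
`(1/k!)(log(1+t))^k = ∑_{n≥k} S₁(n,k) tⁿ/n!`. -/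
noncomputable def stirling1 (n k : ℕ) : ℝ :=
  (n ! : ℝ) * PowerSeries.coeff n ((k ! : ℝ)⁻¹ • logOnePlus ^ k)

/-- The series `∑_{m≥1} x_m ((1/2)_{m,λ} - (-1)^m ⟨1/2⟩_{m,λ}) t^m/m!`. -/
noncomputable def centralSeq (l : ℝ) (x : ℕ → ℝ) : PowerSeries ℝ :=
  PowerSeries.mk fun m => if m = 0 then 0 else
    x m * (dFall l (1 / 2) m - (-1) ^ m * dRise l (1 / 2) m) / (m ! : ℝ)

/-- The degenerate central incomplete Bell polynomial `T_{n,k}(x₁,…,x_{n-k+1}|λ)`. -/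
noncomputable def degCentIncBell (l : ℝ) (x : ℕ → ℝ) (n k : ℕ) : ℝ :=
  (n ! : ℝ) * PowerSeries.coeff n ((k ! : ℝ)⁻¹ • (centralSeq l x) ^ k)

/-- The degenerate central factorial numbers of the second kind `T_{2,λ}(n,k)`, defined by
`(1/k!)(e_λ^{1/2}(t) - e_λ^{-1/2}(t))^k = ∑_{n≥k} T_{2,λ}(n,k) tⁿ/n!`. -/
noncomputable def degCentFact2 (l : ℝ) (n k : ℕ) : ℝ :=
  (n ! : ℝ) * PowerSeries.coeff n
    ((k ! : ℝ)⁻¹ • (degExp l (1 / 2) - degExp l (-(1 / 2))) ^ k)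

/-- The degenerate central Bell polynomial `B^{(c)}_{n,λ}(x)`, defined by
`exp(x(e_λ^{1/2}(t)-e_λ^{-1/2}(t))) = ∑_{n≥0} B^{(c)}_{n,λ}(x) tⁿ/n!`. -/
noncomputable def degCentBellPoly (l x : ℝ) (n : ℕ) : ℝ :=
  (n ! : ℝ) * PowerSeries.coeff n
    (expComp (x • (degExp l (1 / 2) - degExp l (-(1 / 2)))))

/-- The degenerate central complete Bell polynomial `B_n^{(c)}(x₁,…,x_n|λ)`. -/
noncomputable def degCentCompBell (l : ℝ) (x : ℕ → ℝ) (n : ℕ) : ℝ :=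
  (n ! : ℝ) * PowerSeries.coeff n (expComp (centralSeq l x))

/-- The ordinary incomplete Bell polynomials `B_{n,k}(x₁,…,x_{n-k+1})`, defined by
`(1/k!)(∑_{m≥1} x_m t^m/m!)^k = ∑_{n≥k} B_{n,k}(x₁,…) tⁿ/n!`. -/
noncomputable def incBell (x : ℕ → ℝ) (n k : ℕ) : ℝ :=
  (n ! : ℝ) * PowerSeries.coeff n
    ((k ! : ℝ)⁻¹ • (PowerSeries.mk fun m => if m = 0 then 0 else x m / (m ! : ℝ)) ^ k)

/-- The set of tuples `(i₁,…,i_{n-k+1})` of nonnegative integers with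
`i₁+⋯+i_{n-k+1} = k` and `i₁+2i₂+⋯+(n-k+1)i_{n-k+1} = n`
(each such `i_j` is at most `n`, so no solution is cut off). -/
noncomputable def partIdx (n k : ℕ) : Finset (Fin (n - k + 1) → ℕ) :=
  (Fintype.piFinset fun _ => Finset.range (n + 1)).filter
    fun i => (∑ j, i j) = k ∧ (∑ j, (j.1 + 1) * i j) = n

/-- The set of tuples `(m₁,…,m_n)` of nonnegative integers with `m₁+2m₂+⋯+nm_n = n`. -/
noncomputable def partIdx' (n : ℕ) : Finset (Fin n → ℕ) :=
  (Fintype.piFinset fun _ => Finset.range (n + 1)).filter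
    fun m => (∑ j, (j.1 + 1) * m j) = n

/-!
Only the coefficients of `t, …, t^{n-k+1}` of `S = ∑ x_m (1)_{m,λ} t^m/m!` affect the coefficient
of `tⁿ` in `S^k`. Indeed `S` has no constant term, so if `P` is its truncation at order
`N = n-k+1`, then `S^k - P^k = (S - P) ∑ S^i P^{k-1-i}` is divisible by `t^{N+1} t^{k-1}`, and
`N + k > n`. The multinomial theorem applied to `P^k`, a power of a finite sum of monomials,
then gives the formula.
-/

namespace PowerSeries

variable {R : Type*}

theorem X_pow_add_dvd_pow_succ_sub_pow_succ [CommRing R] {A B : R⟦X⟧} {m : ℕ} (k : ℕ)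
    (hA : X ∣ A) (hB : X ∣ B) (hAB : X ^ m ∣ A - B) :
    X ^ (m + k) ∣ A ^ (k + 1) - B ^ (k + 1) := by
  rw [← geom_sum₂_mul, pow_add, mul_comm (X ^ m)]
  refine mul_dvd_mul (dvd_sum fun i hi => ?_) hAB
  rw [Nat.add_sub_cancel, ← Nat.add_sub_of_le (mem_range_succ_iff.mp hi), pow_add,
    Nat.add_sub_cancel_left]
  exact mul_dvd_mul (pow_dvd_pow_of_dvd hA i) (pow_dvd_pow_of_dvd hB _)

theorem X_pow_succ_dvd_sub_sum_monomial [CommRing R] {f : R⟦X⟧} (hf : constantCoeff f = 0)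
    (N : ℕ) : X ^ (N + 1) ∣ f - ∑ j : Fin N, monomial (j + 1) (coeff (j + 1) f) := by
  refine X_pow_dvd_iff.mpr fun m hm => ?_
  rcases m with _ | m
  · simp only [map_sub, map_sum, coeff_zero_eq_constantCoeff_apply, hf, coeff_monomial]
    simp
  · rw [map_sub, map_sum, sub_eq_zero,
      sum_eq_single ⟨m, by omega⟩ (fun j _ hj => ?_) (by simp), coeff_monomial_same]
    rw [coeff_monomial, if_neg (by simpa [Fin.ext_iff, eq_comm] using hj)]

theorem X_dvd_sum_monomial_succ [CommSemiring R] {ι : Type*} (s : Finset ι) (e : ι → ℕ)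
    (c : ι → R) : X ∣ ∑ j ∈ s, monomial (e j + 1) (c j) :=
  dvd_sum fun j _ =>
    ⟨monomial (e j) (c j), by rw [X_eq, monomial_mul_monomial, one_mul, add_comm]⟩

theorem coeff_pow_eq_coeff_sum_monomial_pow [CommRing R] {f : R⟦X⟧}
    (hf : constantCoeff f = 0) {n N k : ℕ} (h : n < N + k) :
    coeff n (f ^ k) = coeff n ((∑ j : Fin N, monomial (j + 1) (coeff (j + 1) f)) ^ k) := by
  rcases k with _ | k
  · rfl
  have hdvd := X_pow_add_dvd_pow_succ_sub_pow_succ k (X_dvd_iff.mpr hf)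
    (X_dvd_sum_monomial_succ _ _ _) (X_pow_succ_dvd_sub_sum_monomial hf N)
  rw [← sub_eq_zero, ← map_sub]
  exact X_pow_dvd_iff.mp hdvd n (by omega)

theorem coeff_sum_monomial_pow [CommSemiring R] {ι : Type*} [DecidableEq ι] (s : Finset ι)
    (e : ι → ℕ) (c : ι → R) (n k : ℕ) :
    coeff n ((∑ j ∈ s, monomial (e j) (c j)) ^ k) =
      ∑ d ∈ (s.piAntidiag k).filter (fun d => ∑ j ∈ s, e j * d j = n),
        (Nat.multinomial s d : R) * ∏ j ∈ s, c j ^ d j := by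
  simp only [sum_pow_eq_sum_piAntidiag, monomial_pow, prod_monomial, map_sum, sum_filter]
  refine sum_congr rfl fun d _ => ?_
  rw [← map_natCast (C (R := R)), coeff_C_mul, coeff_monomial]
  split_ifs <;> simp_all [eq_comm, mul_comm]

end PowerSeries

theorem Nat.cast_multinomial {K : Type*} [Field K] [CharZero K] {α : Type*} (s : Finset α)
    (f : α → ℕ) : (Nat.multinomial s f : K) = (∑ i ∈ s, f i)! / ∏ i ∈ s, ((f i)! : K) := by
  rw [eq_div_iff (prod_ne_zero_iff.mpr fun i _ => Nat.cast_ne_zero.mpr (factorial_ne_zero _)),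
    mul_comm]
  exact_mod_cast Nat.multinomial_spec s f

theorem partIdx_eq_filter_piAntidiag (n k : ℕ) :
    partIdx n k = (univ.piAntidiag k).filter fun i => ∑ j, (j.1 + 1) * i j = n := by
  ext i
  simp only [partIdx, mem_filter, Fintype.mem_piFinset, mem_range, mem_piAntidiag,
    mem_univ, implies_true, and_true]
  refine ⟨fun h => h.2, fun h => ⟨fun j => ?_, h⟩⟩
  calc i j ≤ (j.1 + 1) * i j := Nat.le_mul_of_pos_left _ j.1.succ_pos
    _ ≤ ∑ j, (j.1 + 1) * i j :=
      single_le_sum (f := fun j : Fin _ => (j.1 + 1) * i j) (fun _ _ => Nat.zero_le _)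
        (mem_univ j)
    _ < n + 1 := by omega

theorem constantCoeff_degBellSeries (l : ℝ) (x : ℕ → ℝ) :
    constantCoeff (degBellSeries l x) = 0 := by
  simp [degBellSeries, ← coeff_zero_eq_constantCoeff_apply]

theorem coeff_succ_degBellSeries (l : ℝ) (x : ℕ → ℝ) (m : ℕ) :
    coeff (m + 1) (degBellSeries l x) = x (m + 1) * dFall l 1 (m + 1) / ((m + 1)! : ℝ) := by
  simp [degBellSeries]

theorem degIncBell_explicit_general (l : ℝ) (x : ℕ → ℝ) (n k : ℕ) :
    degIncBell l x n k =
      ∑ i ∈ partIdx n k,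
        ((n ! : ℝ) / ∏ j, ((i j)! : ℝ)) *
          ∏ j, (x (j.1 + 1) * dFall l 1 (j.1 + 1) / ((j.1 + 1)! : ℝ)) ^ i j := by
  rw [degIncBell, map_smul, smul_eq_mul,
    coeff_pow_eq_coeff_sum_monomial_pow (constantCoeff_degBellSeries l x) (N := n - k + 1)
      (by omega),
    coeff_sum_monomial_pow, ← partIdx_eq_filter_piAntidiag, mul_sum, mul_sum]
  refine sum_congr rfl fun i hi => ?_
  simp only [coeff_succ_degBellSeries, Nat.cast_multinomial, (mem_filter.mp hi).2.1]
  field_simp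

/-- explicit formula for the degenerate incomplete Bell polynomials. -/
theorem degIncBell_explicit (l : ℝ) (x : ℕ → ℝ) (n k : ℕ) (hkn : k ≤ n) :
    degIncBell l x n k =
      ∑ i ∈ partIdx n k,
        ((n ! : ℝ) / ∏ j, ((i j)! : ℝ)) *
          ∏ j, (x (j.1 + 1) * dFall l 1 (j.1 + 1) / ((j.1 + 1)! : ℝ)) ^ i j :=
  degIncBell_explicit_general l x n k
end

section
/- For integers n ≥ k ≥ 0 and λ ∈ ℝ, the degenerate central factorial numbers of the second kind satisfy T_{2,λ}(n,k) = ∑_{m=0}^{n} ( (1/k!) ∑_{l=0}^{k} C(k,l) (-1)^{k-l} (l - k/2)^m ) · λ^{n-m} · S₁(n,m), where S₁(n,m) are the Stirling numbers of the first kind. -/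
/-!
Expanding `(e_λ^{1/2}(t) - e_λ^{-1/2}(t))^k` binomially and using
`e_λ^x(t) e_λ^y(t) = e_λ^{x+y}(t)` gives
`T_{2,λ}(n,k) = (1/k!) ∑_j C(k,j) (-1)^{k-j} (j - k/2)_{n,λ}`; it remains to expand each
degenerate falling factorial as `(x)_{n,λ} = ∑_m S₁(n,m) x^m λ^{n-m}`.

Multiplicativity holds because `e_λ^x` is the unique series `F` with `F(0) = 1` and
`(1 + λt) F' = x F`, a condition the Leibniz rule transports to products. The expansion of
`(x)_{n,λ}` is an induction on `n` driven by `S₁(n+1,m+1) = S₁(n,m) - n S₁(n,m+1)`, the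
coefficient form of `(1 + t) ((log(1+t))^{m+1})' = (m+1) (log(1+t))^m`.
-/

open PowerSeries Finset Nat

theorem coeff_one_add_C_mul_X_mul_derivative {R : Type*} [CommSemiring R] (a : R) (F : R⟦X⟧)
    (n : ℕ) :
    coeff n ((1 + C a * X) * d⁄dX R F) = (n + 1) * coeff (n + 1) F + a * n * coeff n F := by
  rw [add_mul, one_mul, map_add, mul_assoc, coeff_C_mul, coeff_derivative]
  cases n with
  | zero => simp [mul_comm]
  | succ n =>
    rw [coeff_succ_X_mul, coeff_derivative]
    push_cast
    ring

theorem dFall_succ (l x : ℝ) (n : ℕ) : dFall l x (n + 1) = dFall l x n * (x - n * l) :=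
  prod_range_succ _ _

theorem coeff_degExp (l x : ℝ) (n : ℕ) : coeff n (degExp l x) = dFall l x n / n ! :=
  coeff_mk _ _

theorem constantCoeff_degExp (l x : ℝ) : constantCoeff (degExp l x) = 1 := by
  simp [← coeff_zero_eq_constantCoeff_apply, coeff_degExp, dFall]

theorem one_add_C_mul_X_mul_derivative_degExp (l x : ℝ) :
    (1 + C l * X) * d⁄dX ℝ (degExp l x) = C x * degExp l x := by
  ext n
  rw [coeff_one_add_C_mul_X_mul_derivative, coeff_C_mul, coeff_degExp, coeff_degExp,
    dFall_succ, factorial_succ]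
  push_cast
  field_simp
  ring

theorem eq_degExp_of_one_add_C_mul_X_mul_derivative {l x : ℝ} {F : ℝ⟦X⟧}
    (h0 : constantCoeff F = 1) (hF : (1 + C l * X) * d⁄dX ℝ F = C x * F) :
    F = degExp l x := by
  ext n
  induction n with
  | zero => simp [h0, constantCoeff_degExp]
  | succ n ih =>
    have h := congrArg (coeff n) hF
    rw [coeff_one_add_C_mul_X_mul_derivative, coeff_C_mul, ih, coeff_degExp] at h
    rw [coeff_degExp, dFall_succ, factorial_succ]
    push_cast at h ⊢
    field_simp at h ⊢
    linear_combination h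

theorem degExp_mul (l x y : ℝ) : degExp l x * degExp l y = degExp l (x + y) := by
  refine eq_degExp_of_one_add_C_mul_X_mul_derivative (by simp [constantCoeff_degExp]) ?_
  rw [Derivation.leibniz, smul_eq_mul, smul_eq_mul, map_add]
  linear_combination degExp l x * one_add_C_mul_X_mul_derivative_degExp l y +
    degExp l y * one_add_C_mul_X_mul_derivative_degExp l x

theorem degExp_zero (l : ℝ) : degExp l 0 = 1 :=
  (eq_degExp_of_one_add_C_mul_X_mul_derivative (by simp) (by simp)).symm

theorem degExp_pow (l x : ℝ) (j : ℕ) : degExp l x ^ j = degExp l (j * x) := by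
  induction j with
  | zero => simp [degExp_zero]
  | succ j ih =>
    rw [pow_succ, ih, degExp_mul]
    push_cast
    ring_nf

theorem degExp_sub_degExp_pow (l a b : ℝ) (k : ℕ) :
    (degExp l a - degExp l b) ^ k = ∑ j ∈ range (k + 1),
      ((-1) ^ (k - j) * k.choose j : ℝ) • degExp l (j * a + (k - j : ℕ) * b) := by
  rw [sub_eq_add_neg, add_pow]
  refine sum_congr rfl fun j _ => ?_
  rw [neg_pow, degExp_pow, degExp_pow, mul_left_comm, degExp_mul, smul_eq_C_mul]
  simp only [map_mul, map_pow, map_neg, map_one, map_natCast]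
  ring

theorem degCentFact2_eq_sum_dFall (l : ℝ) (n k : ℕ) :
    degCentFact2 l n k = (k ! : ℝ)⁻¹ * ∑ j ∈ range (k + 1),
      (k.choose j : ℝ) * (-1) ^ (k - j) * dFall l ((j : ℝ) - (k : ℝ) / 2) n := by
  rw [degCentFact2, degExp_sub_degExp_pow, map_smul, map_sum, smul_eq_mul, mul_left_comm,
    mul_sum]
  congr 1
  refine sum_congr rfl fun j hj => ?_
  have hjk : j ≤ k := Nat.lt_succ_iff.mp (mem_range.mp hj)
  rw [map_smul, coeff_degExp, smul_eq_mul, Nat.cast_sub hjk]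
  field_simp
  ring_nf

theorem constantCoeff_logOnePlus : constantCoeff logOnePlus = 0 := by
  simp [← coeff_zero_eq_constantCoeff_apply, logOnePlus]

theorem one_add_X_mul_derivative_logOnePlus : (1 + X) * d⁄dX ℝ logOnePlus = 1 := by
  ext n
  have h := coeff_one_add_C_mul_X_mul_derivative (1 : ℝ) logOnePlus n
  rw [map_one, one_mul] at h
  rw [h, coeff_one]
  cases n with
  | zero => simp [logOnePlus]
  | succ n =>
    simp only [logOnePlus, coeff_mk, Nat.succ_ne_zero, if_false]
    push_cast
    field_simp
    ring

theorem coeff_logOnePlus_pow_succ (m n : ℕ) :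
    (n + 1) * coeff (n + 1) (logOnePlus ^ (m + 1)) + n * coeff n (logOnePlus ^ (m + 1)) =
      (m + 1) * coeff n (logOnePlus ^ m) := by
  have hD : (1 + C (1 : ℝ) * X) * d⁄dX ℝ (logOnePlus ^ (m + 1)) =
      C ((m : ℝ) + 1) * logOnePlus ^ m := by
    rw [Derivation.leibniz_pow, Nat.add_sub_cancel, map_one, one_mul, smul_eq_mul, nsmul_eq_mul,
      show C ((m : ℝ) + 1) = ((m + 1 : ℕ) : ℝ⟦X⟧) by simp]
    linear_combination ((m + 1 : ℕ) * logOnePlus ^ m) * one_add_X_mul_derivative_logOnePlus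
  have h := congrArg (coeff n) hD
  rwa [coeff_one_add_C_mul_X_mul_derivative, coeff_C_mul, one_mul] at h

theorem stirling1_eq (n m : ℕ) : stirling1 n m = n ! / m ! * coeff n (logOnePlus ^ m) := by
  rw [stirling1, map_smul, smul_eq_mul]
  ring

theorem stirling1_zero_zero : stirling1 0 0 = 1 := by
  simp [stirling1_eq]

theorem stirling1_succ_zero (n : ℕ) : stirling1 (n + 1) 0 = 0 := by
  simp [stirling1_eq, coeff_one]

theorem stirling1_eq_zero_of_lt {n m : ℕ} (h : n < m) : stirling1 n m = 0 := by
  have hle : (m : ℕ∞) ≤ (logOnePlus ^ m).order :=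
    le_order_pow_of_constantCoeff_eq_zero m constantCoeff_logOnePlus
  rw [stirling1_eq, coeff_of_lt_order n (lt_of_lt_of_le (by exact_mod_cast h) hle), mul_zero]

theorem stirling1_succ_succ (n m : ℕ) :
    stirling1 (n + 1) (m + 1) = stirling1 n m - n * stirling1 n (m + 1) := by
  have h := coeff_logOnePlus_pow_succ m n
  simp only [stirling1_eq, factorial_succ]
  push_cast
  field_simp
  linear_combination h

theorem dFall_eq_sum_antidiagonal (l x : ℝ) (n : ℕ) :
    dFall l x n = ∑ p ∈ antidiagonal n, stirling1 n p.1 * x ^ p.1 * l ^ p.2 := by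
  induction n with
  | zero => simp [dFall, stirling1_zero_zero]
  | succ n ih =>
    have hshift : ∑ p ∈ antidiagonal n, stirling1 n (p.1 + 1) * x ^ (p.1 + 1) * l ^ p.2 =
        l * ∑ p ∈ antidiagonal n, stirling1 n p.1 * x ^ p.1 * l ^ p.2 -
          stirling1 n 0 * l ^ (n + 1) := by
      -- peel the sum over `antidiagonal (n + 1)` at either end
      have h₁ := sum_antidiagonal_succ (n := n)
        (f := fun p => stirling1 n p.1 * x ^ p.1 * l ^ p.2)
      have h₂ := sum_antidiagonal_succ' (n := n)
        (f := fun p => stirling1 n p.1 * x ^ p.1 * l ^ p.2)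
      have h₃ : ∑ p ∈ antidiagonal n, stirling1 n p.1 * x ^ p.1 * l ^ (p.2 + 1) =
          l * ∑ p ∈ antidiagonal n, stirling1 n p.1 * x ^ p.1 * l ^ p.2 := by
        rw [mul_sum]
        exact sum_congr rfl fun p _ => by ring
      rw [stirling1_eq_zero_of_lt n.lt_succ_self] at h₂
      linear_combination h₂ - h₁ + h₃
    have hzero : (n : ℝ) * stirling1 n 0 = 0 := by
      cases n with
      | zero => simp
      | succ n => rw [stirling1_succ_zero, mul_zero]
    have hsplit : ∀ p ∈ antidiagonal n,
        stirling1 (n + 1) (p.1 + 1) * x ^ (p.1 + 1) * l ^ p.2 =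
          x * (stirling1 n p.1 * x ^ p.1 * l ^ p.2) -
            n * (stirling1 n (p.1 + 1) * x ^ (p.1 + 1) * l ^ p.2) := fun p _ => by
      rw [stirling1_succ_succ]
      ring
    rw [sum_antidiagonal_succ, stirling1_succ_zero, sum_congr rfl hsplit, sum_sub_distrib,
      ← mul_sum, ← mul_sum, hshift, dFall_succ, ih]
    linear_combination (-l ^ (n + 1)) * hzero

theorem degCentFact2_eq_general (l : ℝ) (n k : ℕ) :
    degCentFact2 l n k =
      ∑ m ∈ Finset.range (n + 1),
        ((k ! : ℝ)⁻¹ * ∑ j ∈ Finset.range (k + 1),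
            (k.choose j : ℝ) * (-1) ^ (k - j) * ((j : ℝ) - (k : ℝ) / 2) ^ m) *
          l ^ (n - m) * stirling1 n m := by
  simp_rw [degCentFact2_eq_sum_dFall, dFall_eq_sum_antidiagonal,
    Nat.sum_antidiagonal_eq_sum_range_succ_mk, mul_sum, sum_mul]
  rw [sum_comm]
  exact sum_congr rfl fun m _ => sum_congr rfl fun j _ => by ring

/-- explicit formula for the degenerate central factorial numbers of the
second kind in terms of the Stirling numbers of the first kind. -/
theorem degCentFact2_eq (l : ℝ) (n k : ℕ) (hkn : k ≤ n) :
    degCentFact2 l n k =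
      ∑ m ∈ Finset.range (n + 1),
        ((k ! : ℝ)⁻¹ * ∑ j ∈ Finset.range (k + 1),
            (k.choose j : ℝ) * (-1) ^ (k - j) * ((j : ℝ) - (k : ℝ) / 2) ^ m) *
          l ^ (n - m) * stirling1 n m :=
  degCentFact2_eq_general l n k
end

section
/- For integers n ≥ k ≥ 0 with n - k ≡ 0 (mod 2) and λ ∈ ℝ, the degenerate central incomplete Bell polynomial satisfies the explicit formula T_{n,k}(x₁,…,x_{n-k+1}|λ) = ∑ n!/(i₁!⋯i_{n-k+1}!) · ∏_{j=1}^{n-k+1} ( x_j ((1/2)_{j,λ} - (-1)^j⟨1/2⟩_{j,λ}) / j! )^{i_j}, where the summation is over all nonnegative integers i₁,…,i_{n-k+1} with i₁+i₂+⋯+i_{n-k+1} = k and i₁+2i₂+⋯+(n-k+1)i_{n-k+1} = n. -/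
open PowerSeries Finset Nat

/-!
Every factor of `(∑_{m ≥ 1} a_m t^m)^k` is divisible by `t`, so cutting the series off after
degree `n - k + 1` changes its `k`-th power only in degrees above `n`. The cut-off series is a
polynomial `∑_{j ≤ n-k+1} a_j t^j`, whose `k`-th power the multinomial theorem expands as a sum
over exponent tuples `(i_1, …, i_{n-k+1})` with `∑ i_j = k`; the coefficient of `t^n` keeps
exactly those with `∑ j i_j = n`, each weighted by `k! / ∏ i_j!`.
-/

theorem dvd_pow_succ_sub_pow_succ {R : Type*} [CommRing R] {p f g : R} {N : ℕ}
    (hf : p ∣ f) (hg : p ∣ g) (hfg : p ^ N ∣ f - g) :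
    ∀ k : ℕ, p ^ (N + k) ∣ f ^ (k + 1) - g ^ (k + 1)
  | 0 => by simpa using hfg
  | k + 1 => by
    have hk := dvd_pow_succ_sub_pow_succ hf hg hfg k
    have expand : f ^ (k + 2) - g ^ (k + 2) =
        f * (f ^ (k + 1) - g ^ (k + 1)) + g ^ (k + 1) * (f - g) := by
      ring
    rw [expand]
    refine dvd_add ?_ ?_
    · rw [← add_assoc, _root_.pow_succ']
      exact mul_dvd_mul hf hk
    · rw [add_comm N, pow_add]
      exact mul_dvd_mul (pow_dvd_pow_of_dvd hg _) hfg

theorem multinomial_univ_eq_div {K ι : Type*} [Field K] [CharZero K] [Fintype ι]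
    (i : ι → ℕ) :
    (multinomial univ i : K) = (∑ j, i j)! / ∏ j, ((i j)! : K) := by
  rw [eq_div_iff (prod_ne_zero_iff.mpr fun j _ => Nat.cast_ne_zero.mpr (factorial_ne_zero _))]
  exact_mod_cast by rw [mul_comm, multinomial_spec]

namespace PowerSeries

variable {R : Type*} [CommRing R]

theorem coeff_pow_eq_of_X_pow_dvd_sub {f g : R⟦X⟧} {N n k : ℕ} (hf : X ∣ f) (hg : X ∣ g)
    (hfg : X ^ (N + 1) ∣ f - g) (hn : n < N + k) : coeff n (f ^ k) = coeff n (g ^ k) := by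
  cases k with
  | zero => rfl
  | succ k =>
    rw [← sub_eq_zero, ← map_sub]
    exact X_pow_dvd_iff.mp (dvd_pow_succ_sub_pow_succ hf hg hfg k) n (by omega)

theorem X_pow_succ_dvd_mk_sub_sum_C_mul_X_pow (a : ℕ → R) (N : ℕ) :
    X ^ (N + 1) ∣
      mk (fun m => if m = 0 then 0 else a m) - ∑ j : Fin N, C (a (j.1 + 1)) * X ^ (j.1 + 1) := by
  rw [X_pow_dvd_iff]
  intro m hm
  rw [map_sub, map_sum, coeff_mk]
  simp only [coeff_C_mul_X_pow]
  rcases m with _ | j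
  · simp
  · rw [Fin.sum_univ_eq_sum_range (fun x => if j + 1 = x + 1 then a (x + 1) else 0)]
    simp [show j < N by omega]

theorem coeff_sum_C_mul_X_pow_pow (a : ℕ → R) (N n k : ℕ) :
    coeff n ((∑ j : Fin N, C (a (j.1 + 1)) * X ^ (j.1 + 1)) ^ k) =
      ∑ i ∈ (univ.piAntidiag k).filter (fun i : Fin N → ℕ => ∑ j, (j.1 + 1) * i j = n),
        (multinomial univ i : R) * ∏ j, a (j.1 + 1) ^ i j := by
  rw [sum_pow_eq_sum_piAntidiag, map_sum, sum_filter]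
  refine sum_congr rfl fun i _ => ?_
  have monomial : ∏ j, (C (a (j.1 + 1)) * X ^ (j.1 + 1)) ^ i j =
      C (∏ j, a (j.1 + 1) ^ i j) * X ^ ∑ j, (j.1 + 1) * i j := by
    simp only [mul_pow, prod_mul_distrib, map_prod, map_pow, ← pow_mul, prod_pow_eq_pow_sum]
  rw [monomial, ← map_natCast C, ← mul_assoc, ← map_mul, coeff_C_mul_X_pow]
  exact if_congr eq_comm rfl rfl

end PowerSeries

theorem filter_piAntidiag_eq_partIdx (n k : ℕ) :
    (univ.piAntidiag k).filter (fun i : Fin (n - k + 1) → ℕ => ∑ j, (j.1 + 1) * i j = n) =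
      partIdx n k := by
  ext i
  simp only [mem_filter, mem_piAntidiag, partIdx, Fintype.mem_piFinset, mem_range, mem_univ,
    implies_true, and_true]
  refine ⟨fun ⟨hk, hn⟩ => ⟨fun j => ?_, hk, hn⟩, fun ⟨_, hk, hn⟩ => ⟨hk, hn⟩⟩
  have := single_le_sum (fun j _ => Nat.zero_le ((j.1 + 1) * i j)) (mem_univ j)
  nlinarith

theorem coeff_pow_mk_eq_sum_partIdx {K : Type*} [Field K] [CharZero K] (a : ℕ → K) (n k : ℕ) :
    coeff n ((mk fun m => if m = 0 then 0 else a m) ^ k) =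
      ∑ i ∈ partIdx n k, ((k ! : K) / ∏ j, ((i j)! : K)) * ∏ j, a (j.1 + 1) ^ i j := by
  have hf : X ∣ mk fun m => if m = 0 then 0 else a m := X_dvd_iff.mpr (by simp)
  have hg : X ∣ ∑ j : Fin (n - k + 1), C (a (j.1 + 1)) * X ^ (j.1 + 1) :=
    dvd_sum fun j _ => dvd_mul_of_dvd_right (dvd_pow_self X j.1.succ_ne_zero) _
  rw [coeff_pow_eq_of_X_pow_dvd_sub hf hg (X_pow_succ_dvd_mk_sub_sum_C_mul_X_pow a _) (by omega),
    coeff_sum_C_mul_X_pow_pow, filter_piAntidiag_eq_partIdx]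
  refine sum_congr rfl fun i hi => ?_
  rw [multinomial_univ_eq_div, (mem_filter.mp hi).2.1]

theorem degCentIncBell_explicit_general (l : ℝ) (x : ℕ → ℝ) (n k : ℕ) :
    degCentIncBell l x n k =
      ∑ i ∈ partIdx n k,
        ((n ! : ℝ) / ∏ j, ((i j)! : ℝ)) *
          ∏ j, (x (j.1 + 1) *
              (dFall l (1 / 2) (j.1 + 1) - (-1) ^ (j.1 + 1) * dRise l (1 / 2) (j.1 + 1)) /
                ((j.1 + 1)! : ℝ)) ^ i j := by
  rw [degCentIncBell, centralSeq, map_smul, smul_eq_mul, coeff_pow_mk_eq_sum_partIdx, mul_sum,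
    mul_sum]
  refine sum_congr rfl fun i _ => ?_
  field_simp

/-- explicit formula for the degenerate central incomplete Bell polynomials. -/
theorem degCentIncBell_explicit (l : ℝ) (x : ℕ → ℝ) (n k : ℕ) (hkn : k ≤ n)
    (hpar : Even ((n : ℤ) - k)) :
    degCentIncBell l x n k =
      ∑ i ∈ partIdx n k,
        ((n ! : ℝ) / ∏ j, ((i j)! : ℝ)) *
          ∏ j, (x (j.1 + 1) *
              (dFall l (1 / 2) (j.1 + 1) - (-1) ^ (j.1 + 1) * dRise l (1 / 2) (j.1 + 1)) /
                ((j.1 + 1)! : ℝ)) ^ i j :=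
  degCentIncBell_explicit_general l x n k
end

section
/- For integers n ≥ k ≥ 0 with n - k ≡ 0 (mod 2), λ ∈ ℝ, and x ∈ ℝ, one has T_{n,k}(x, x, …, x|λ) = x^k · T_{n,k}(1, 1, …, 1|λ). -/
open PowerSeries Finset Nat

theorem centralSeq_smul (l c : ℝ) (x : ℕ → ℝ) :
    centralSeq l (c • x) = c • centralSeq l x := by
  ext m
  simp only [centralSeq, coeff_mk, map_smul, Pi.smul_apply, smul_eq_mul]
  split_ifs <;> ring

theorem degCentIncBell_smul (l c : ℝ) (x : ℕ → ℝ) (n k : ℕ) :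
    degCentIncBell l (c • x) n k = c ^ k * degCentIncBell l x n k := by
  simp only [degCentIncBell, centralSeq_smul, smul_pow, smul_comm ((k ! : ℝ)⁻¹), map_smul,
    smul_eq_mul]
  ring

theorem degCentIncBell_const_general (l x : ℝ) (n k : ℕ) :
    degCentIncBell l (fun _ => x) n k = x ^ k * degCentIncBell l (fun _ => 1) n k := by
  have hconst : (fun _ : ℕ => x) = x • fun _ => 1 := by
    funext
    simp
  rw [hconst, degCentIncBell_smul]

/-- `T_{n,k}(x,x,…,x|λ) = x^k T_{n,k}(1,1,…,1|λ)`. -/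
theorem degCentIncBell_const (l x : ℝ) (n k : ℕ) (hkn : k ≤ n) (hpar : Even ((n : ℤ) - k)) :
    degCentIncBell l (fun _ => x) n k = x ^ k * degCentIncBell l (fun _ => 1) n k :=
  degCentIncBell_const_general l x n k
end

section
/- (Theorem 2.4) For every integer n ≥ 1, λ ∈ ℝ, and any real sequence x₁,x₂,…, the degenerate central complete Bell polynomial satisfies B_n^{(c)}(x₁,x₂,…,x_n|λ) = ∑_{m₁+2m₂+⋯+nm_n = n} n!/(m₁! m₂! ⋯ m_n!) · ∏_{j=1}^{n} ( x_j ((1/2)_{j,λ} - (-1)^j⟨1/2⟩_{j,λ}) / j! )^{m_j}, where the sum is over all nonnegative integers m₁,…,m_n with m₁+2m₂+⋯+nm_n = n. -/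
open PowerSeries Finset Nat

/-! Since `G` has no constant term, the `n`-th coefficient of `exp G` only sees the polynomial
`∑_{j<n} a_{j+1} t^{j+1}`, `a_i` the coefficients of `G`. By the multinomial theorem, in its
`k`-th power the monomial `∏ (a_{j+1} t^{j+1})^{m_j}` has degree `∑ (j+1) m_j` and coefficient
`k!/∏ m_j!`, and the `1/k!` of the exponential cancels `k!`. Grouping the terms by
`k = ∑ m_j` leaves exactly the sum over `m₁ + 2m₂ + ⋯ + n m_n = n`. -/

namespace PowerSeries

variable {R : Type*} [CommSemiring R]

theorem coeff_pow_eq_coeff_trunc_pow (f : R⟦X⟧) (n k : ℕ) :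
    coeff n (f ^ k) = coeff n ((trunc (n + 1) f : R⟦X⟧) ^ k) := by
  rw [← coeff_coe_trunc_of_lt n.lt_succ_self, ← trunc_trunc_pow,
    coeff_coe_trunc_of_lt n.lt_succ_self]

theorem coe_trunc_succ_eq_sum_fin {f : R⟦X⟧} (hf : constantCoeff f = 0) (n : ℕ) :
    (trunc (n + 1) f : R⟦X⟧) = ∑ j : Fin n, C (coeff (j + 1) f) * X ^ (j + 1 : ℕ) := by
  rw [← Polynomial.eval₂_C_X_eq_coe, eval₂_trunc_eq_sum_range, sum_range_succ',
    Fin.sum_univ_eq_sum_range (fun j => C (coeff (j + 1) f) * X ^ (j + 1)),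
    coeff_zero_eq_constantCoeff_apply, hf, map_zero, zero_mul, add_zero]

theorem coeff_sum_C_mul_X_pow_pow_s17 {ι : Type*} [Fintype ι] [DecidableEq ι] (a : ι → R)
    (w : ι → ℕ) (n k : ℕ) :
    coeff n ((∑ i, C (a i) * X ^ w i) ^ k) =
      ∑ m ∈ piAntidiag univ k with ∑ i, w i * m i = n,
        Nat.multinomial univ m * ∏ i, a i ^ m i := by
  rw [sum_pow_eq_sum_piAntidiag, map_sum, sum_filter]
  refine sum_congr rfl fun m _ => ?_
  simp_rw [mul_pow, ← map_pow, ← pow_mul, prod_mul_distrib, ← map_prod, prod_pow_eq_pow_sum,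
    ← map_natCast (C (R := R)), ← mul_assoc, ← map_mul, coeff_C_mul_X_pow]
  exact if_congr eq_comm rfl rfl

end PowerSeries

theorem Nat.cast_multinomial_div_factorial_sum {K ι : Type*} [Field K] [CharZero K]
    (s : Finset ι) (m : ι → ℕ) :
    (Nat.multinomial s m : K) / (∑ i ∈ s, m i)! = (∏ i ∈ s, ((m i)! : K))⁻¹ := by
  rw [← Nat.multinomial_spec s m, Nat.cast_mul, Nat.cast_prod,
    div_mul_cancel_right₀ (Nat.cast_ne_zero.2 (Nat.multinomial_pos s m).ne')]

theorem mem_partIdx' {n : ℕ} {m : Fin n → ℕ} :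
    m ∈ partIdx' n ↔ ∑ j, (j.1 + 1) * m j = n := by
  refine ⟨fun hm => (mem_filter.1 hm).2, fun hm => mem_filter.2 ⟨?_, hm⟩⟩
  refine Fintype.mem_piFinset.2 fun j => mem_range.2 (Nat.lt_succ_of_le ?_)
  calc m j ≤ (j.1 + 1) * m j := Nat.le_mul_of_pos_left _ j.1.succ_pos
    _ ≤ ∑ j, (j.1 + 1) * m j := single_le_sum (f := fun j : Fin n => (j.1 + 1) * m j)
      (fun _ _ => Nat.zero_le _) (mem_univ j)
    _ = n := hm

theorem sum_le_of_mem_partIdx' {n : ℕ} {m : Fin n → ℕ} (hm : m ∈ partIdx' n) :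
    ∑ j, m j ≤ n :=
  (sum_le_sum fun j _ => Nat.le_mul_of_pos_left (m j) j.1.succ_pos).trans_eq (mem_partIdx'.1 hm)

theorem filter_piAntidiag_eq_filter_partIdx' (n k : ℕ) :
    {m ∈ piAntidiag (univ : Finset (Fin n)) k | ∑ j, (j.1 + 1) * m j = n} =
      {m ∈ partIdx' n | ∑ j, m j = k} := by
  ext m
  simp only [mem_filter, mem_piAntidiag, mem_partIdx', mem_univ, implies_true, and_true]
  exact and_comm

theorem coeff_expComp_eq_sum_partIdx' {G : PowerSeries ℝ} (hG : constantCoeff G = 0) (n : ℕ) :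
    coeff n (expComp G) =
      ∑ m ∈ partIdx' n, (∏ j, ((m j)! : ℝ))⁻¹ * ∏ j, coeff (j.1 + 1) G ^ m j := by
  calc coeff n (expComp G)
      = ∑ k ∈ range (n + 1), (k ! : ℝ)⁻¹ *
          ∑ m ∈ piAntidiag univ k with ∑ j : Fin n, (j.1 + 1) * m j = n,
            Nat.multinomial univ m * ∏ j, coeff (j.1 + 1) G ^ m j := by
        simp only [expComp, coeff_mk, coeff_pow_eq_coeff_trunc_pow G n,
          coe_trunc_succ_eq_sum_fin hG, coeff_sum_C_mul_X_pow_pow_s17]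
    _ = ∑ k ∈ range (n + 1), ∑ m ∈ partIdx' n with ∑ j, m j = k,
          (∏ j, ((m j)! : ℝ))⁻¹ * ∏ j, coeff (j.1 + 1) G ^ m j := by
        refine sum_congr rfl fun k _ => ?_
        rw [filter_piAntidiag_eq_filter_partIdx', mul_sum]
        refine sum_congr rfl fun m hm => ?_
        rw [← (mem_filter.1 hm).2, ← mul_assoc, inv_mul_eq_div,
          Nat.cast_multinomial_div_factorial_sum]
    _ = _ := sum_fiberwise_of_maps_to
          (fun m hm => mem_range.2 (Nat.lt_succ_of_le (sum_le_of_mem_partIdx' hm))) _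

theorem degCentCompBell_explicit_general (l : ℝ) (x : ℕ → ℝ) (n : ℕ) :
    degCentCompBell l x n =
      ∑ m ∈ partIdx' n,
        ((n ! : ℝ) / ∏ j, ((m j)! : ℝ)) *
          ∏ j, (x (j.1 + 1) *
              (dFall l (1 / 2) (j.1 + 1) - (-1) ^ (j.1 + 1) * dRise l (1 / 2) (j.1 + 1)) /
                ((j.1 + 1)! : ℝ)) ^ m j := by
  have hconst : constantCoeff (centralSeq l x) = 0 := by
    rw [← coeff_zero_eq_constantCoeff_apply, centralSeq, coeff_mk, if_pos rfl]
  rw [degCentCompBell, coeff_expComp_eq_sum_partIdx' hconst, mul_sum]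
  refine sum_congr rfl fun m _ => ?_
  simp only [centralSeq, coeff_mk, Nat.succ_ne_zero, if_false, div_eq_mul_inv, mul_assoc]

/-- Theorem 2.4: explicit formula for the degenerate central complete Bell
polynomials. -/
theorem degCentCompBell_explicit (l : ℝ) (x : ℕ → ℝ) (n : ℕ) (hn : 1 ≤ n) :
    degCentCompBell l x n =
      ∑ m ∈ partIdx' n,
        ((n ! : ℝ) / ∏ j, ((m j)! : ℝ)) *
          ∏ j, (x (j.1 + 1) *
              (dFall l (1 / 2) (j.1 + 1) - (-1) ^ (j.1 + 1) * dRise l (1 / 2) (j.1 + 1)) /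
                ((j.1 + 1)! : ℝ)) ^ m j :=
  degCentCompBell_explicit_general l x n
end

section
/- (Theorem 2.5) For every integer n ≥ 0, λ ∈ ℝ, and x ∈ ℝ, one has ∑_{k=0}^{n} x^k · T_{n,k}(1, 1, …, 1|λ) = B^{(c)}_{n,λ}(x), where B^{(c)}_{n,λ}(x) is the degenerate central Bell polynomial. -/
open PowerSeries Finset Nat

/-! At the all-ones sequence the series `centralSeq` is `e_λ^{1/2}(t) - e_λ^{-1/2}(t)`, because
`(-1/2)_{m,λ} = (-1)^m ⟨1/2⟩_{m,λ}`. The identity is then the coefficientwise expansion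
`exp(x G) = ∑_k x^k G^k / k!` of the exponential at `G = e_λ^{1/2}(t) - e_λ^{-1/2}(t)`. -/

theorem dFall_neg (l x : ℝ) (m : ℕ) : dFall l (-x) m = (-1) ^ m * dRise l x m := by
  have factor (i : ℕ) : -x - i * l = -1 * (x + i * l) := by ring
  simp only [dFall, dRise, factor, Finset.prod_mul_distrib, Finset.prod_const, Finset.card_range]

theorem centralSeq_one (l : ℝ) :
    centralSeq l (fun _ => 1) = degExp l (1 / 2) - degExp l (-(1 / 2)) := by
  ext m
  rw [centralSeq, degExp, degExp, map_sub, coeff_mk, coeff_mk, coeff_mk, dFall_neg]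
  rcases eq_or_ne m 0 with rfl | hm
  · simp [dFall, dRise]
  · rw [if_neg hm]
    ring

theorem coeff_expComp_smul (x : ℝ) (G : PowerSeries ℝ) (n : ℕ) :
    coeff n (expComp (x • G)) =
      ∑ k ∈ Finset.range (n + 1), x ^ k * coeff n ((k ! : ℝ)⁻¹ • G ^ k) := by
  rw [expComp, coeff_mk]
  refine Finset.sum_congr rfl fun k _ => ?_
  rw [smul_pow, map_smul, map_smul, smul_eq_mul, smul_eq_mul]
  ring

/-- Theorem 2.5: `∑_{k=0}^{n} x^k T_{n,k}(1,…,1|λ) = B^{(c)}_{n,λ}(x)`. -/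
theorem sum_degCentIncBell_one_eq (l x : ℝ) (n : ℕ) :
    ∑ k ∈ Finset.range (n + 1), x ^ k * degCentIncBell l (fun _ => 1) n k =
      degCentBellPoly l x n := by
  rw [degCentBellPoly, coeff_expComp_smul, ← centralSeq_one, Finset.mul_sum]
  refine Finset.sum_congr rfl fun k _ => ?_
  rw [degCentIncBell]
  ring
end
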